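/- Maurer–Rhodes Theorem. Every finite simple group G is either abelian or functionally complete; that is, if G is a finite simple group that is not abelian, then the set consisting of the group multiplication, the inversion operation, and all constant unary operations on G generates the clone O_G of all finitary operations on G. -/

import Mathlib

universe u

/-- The type of finitary operations (of positive arity `n + 1`) on `A`. -/
abbrev Ops (A : Type u) : Type u := Σ n : ℕ, (Fin (n + 1) → A) → A

/-- A set of finitary operations on `A` is a clone if it contains all projection
operations and is closed under composition. -/
def IsClone {A : Type u} (C : Set (Ops A)) : Prop :=
  (∀ (n : ℕ) (i : Fin (n + 1)), (⟨n, fun x => x i⟩ : Ops A) ∈ C) ∧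
  ∀ (n m : ℕ) (f : (Fin (n + 1) → A) → A) (g : Fin (n + 1) → (Fin (m + 1) → A) → A),
    (⟨n, f⟩ : Ops A) ∈ C → (∀ i, (⟨m, g i⟩ : Ops A) ∈ C) →
    (⟨m, fun x => f fun i => g i x⟩ : Ops A) ∈ C

/-- The clone generated by a set `F` of operations: the least clone containing `F`. -/
def cloneGen {A : Type u} (F : Set (Ops A)) : Set (Ops A) :=
  ⋂₀ {C : Set (Ops A) | IsClone C ∧ F ⊆ C}

/-- The clone of all projection operations on `A`. -/
def projClone (A : Type u) : Set (Ops A) :=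
  {f : Ops A | ∃ i : Fin (f.1 + 1), f.2 = fun x => x i}

/-- A clone `M` is maximal if it is a proper subclone of the clone of all operations
and the clone of all operations is the only clone properly containing it. -/
def IsMaximalClone {A : Type u} (M : Set (Ops A)) : Prop :=
  IsClone M ∧ M ≠ Set.univ ∧
    ∀ D : Set (Ops A), IsClone D → M ⊆ D → D = M ∨ D = Set.univ

/-- A clone `C` is minimal if the clone of projections is its unique proper subclone. -/
def IsMinimalClone {A : Type u} (C : Set (Ops A)) : Prop :=
  IsClone C ∧ C ≠ projClone A ∧
    ∀ D : Set (Ops A), IsClone D → D ⊆ C → D = projClone A ∨ D = C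

/-- An `n`-ary operation `f` preserves a `k`-ary relation `ρ` if applying `f`
coordinatewise to tuples from `ρ` always yields a tuple in `ρ`. -/
def Preserves {A : Type u} {n k : ℕ} (f : (Fin n → A) → A) (ρ : Set (Fin k → A)) : Prop :=
  ∀ t : Fin n → Fin k → A, (∀ i, t i ∈ ρ) → (fun j => f fun i => t i j) ∈ ρ

/-- `Pol ρ` is the clone of all operations preserving the relation `ρ`. -/
def Pol {A : Type u} {k : ℕ} (ρ : Set (Fin k → A)) : Set (Ops A) :=
  {f : Ops A | Preserves f.2 ρ}

/-!
The `n`-ary members of a clone containing multiplication, inversion and the constants form a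
subgroup `S` of `Gⁿ → G` that contains the constants and separates points. For `h ∈ S` with
`h a ≠ 1`, the values at `a` of the members of `S` supported inside the support of `h` form a normal
subgroup of `G` containing `h a`, so by simplicity they exhaust `G`. As `G` is not abelian, this
gives `p` and `q`, supported inside the supports of two given functions, with `⁅p a, q a⁆ ≠ 1`; the
commutator `⁅p, q⁆` is then supported in the intersection of the two supports. Intersecting
finitely many supports yields a member of `S` supported exactly at `a`, hence every
`Pi.mulSingle a g` lies in `S`, and these generate `Gⁿ → G`.
-/

open Function

section Clone

variable {A : Type u} {C : Set (Ops A)}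

theorem isClone_cloneGen (F : Set (Ops A)) : IsClone (cloneGen F) :=
  ⟨fun n i => Set.mem_sInter.2 fun _ hC => hC.1.1 n i,
    fun n m f g hf hg => Set.mem_sInter.2 fun D hD =>
      hD.1.2 n m f g (Set.mem_sInter.1 hf D hD) fun i => Set.mem_sInter.1 (hg i) D hD⟩

theorem subset_cloneGen (F : Set (Ops A)) : F ⊆ cloneGen F :=
  fun _ hf => Set.mem_sInter.2 fun _ hC => hC.2 hf

theorem IsClone.const_mem (hC : IsClone C) {c : A} (hc : (⟨0, fun _ => c⟩ : Ops A) ∈ C)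
    (n : ℕ) : (⟨n, fun _ => c⟩ : Ops A) ∈ C :=
  hC.2 0 n _ (fun _ x => x 0) hc fun _ => hC.1 n 0

theorem IsClone.unary_comp_mem (hC : IsClone C) {op : A → A}
    (hop : (⟨0, fun x => op (x 0)⟩ : Ops A) ∈ C) {n : ℕ} {f : (Fin (n + 1) → A) → A}
    (hf : (⟨n, f⟩ : Ops A) ∈ C) : (⟨n, fun x => op (f x)⟩ : Ops A) ∈ C :=
  hC.2 0 n _ (fun _ => f) hop fun _ => hf

theorem IsClone.binary_comp_mem (hC : IsClone C) {op : A → A → A}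
    (hop : (⟨1, fun x => op (x 0) (x 1)⟩ : Ops A) ∈ C) {n : ℕ}
    {f g : (Fin (n + 1) → A) → A} (hf : (⟨n, f⟩ : Ops A) ∈ C) (hg : (⟨n, g⟩ : Ops A) ∈ C) :
    (⟨n, fun x => op (f x) (g x)⟩ : Ops A) ∈ C :=
  hC.2 1 n _ ![f, g] hop fun i => by fin_cases i <;> assumption

end Clone

section Separation

variable {X G : Type*} [Group G]

variable (G) in
def mulSupportSubsetSubgroup (T : Set X) : Subgroup (X → G) where
  carrier := {k | mulSupport k ⊆ T}
  mul_mem' hk hl := (mulSupport_mul _ _).trans (Set.union_subset hk hl)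
  one_mem' := by simp
  inv_mem' hk := (mulSupport_inv _).trans_subset hk

variable {S : Subgroup (X → G)}

theorem exists_mem_apply_eq_of_mem_mulSupport (hG : IsSimpleGroup G)
    (hconst : ∀ c : G, const X c ∈ S) {h : X → G} (hh : h ∈ S) {a : X}
    (ha : a ∈ mulSupport h) (g : G) :
    ∃ k ∈ S, mulSupport k ⊆ mulSupport h ∧ k a = g := by
  set N := (S ⊓ mulSupportSubsetSubgroup G (mulSupport h)).map (Pi.evalMonoidHom _ a)
  have hN : N.Normal := ⟨by
    rintro _ ⟨k, ⟨hkS, hk⟩, rfl⟩ c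
    refine ⟨const X c * k * const X c⁻¹,
      ⟨S.mul_mem (S.mul_mem (hconst c) hkS) (hconst c⁻¹), fun x hx => hk ?_⟩, rfl⟩
    contrapose! hx
    simp [notMem_mulSupport.1 hx]⟩
  have haN : h a ∈ N := ⟨h, ⟨hh, (subset_refl _ : mulSupport h ⊆ _)⟩, rfl⟩
  obtain ⟨k, ⟨hkS, hk⟩, rfl⟩ : g ∈ N :=
    (hG.eq_bot_or_eq_top_of_normal N hN).resolve_left
      (fun hbot => ha (by simpa [hbot] using haN)) ▸ Subgroup.mem_top g
  exact ⟨k, hkS, hk, rfl⟩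

theorem exists_mem_mulSupport_subset_inter (hG : IsSimpleGroup G)
    (hnc : ∃ u v : G, u * v ≠ v * u) (hconst : ∀ c : G, const X c ∈ S) {h₁ h₂ : X → G}
    (h₁S : h₁ ∈ S) (h₂S : h₂ ∈ S) {a : X} (ha₁ : a ∈ mulSupport h₁) (ha₂ : a ∈ mulSupport h₂) :
    ∃ k ∈ S, a ∈ mulSupport k ∧ mulSupport k ⊆ mulSupport h₁ ∩ mulSupport h₂ := by
  obtain ⟨u, v, huv⟩ := hnc
  obtain ⟨p, hpS, hp, rfl⟩ := exists_mem_apply_eq_of_mem_mulSupport hG hconst h₁S ha₁ u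
  obtain ⟨q, hqS, hq, rfl⟩ := exists_mem_apply_eq_of_mem_mulSupport hG hconst h₂S ha₂ v
  refine ⟨p * q * p⁻¹ * q⁻¹,
    S.mul_mem (S.mul_mem (S.mul_mem hpS hqS) (S.inv_mem hpS)) (S.inv_mem hqS), ?_,
    fun x hx => ⟨fun hx₁ => hx ?_, fun hx₂ => hx ?_⟩⟩
  · rwa [mem_mulSupport, Pi.mul_apply, Pi.mul_apply, Pi.mul_apply, Pi.inv_apply, Pi.inv_apply,
      ← commutatorElement_def, Ne, commutatorElement_eq_one_iff_mul_comm]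
  · simp [notMem_mulSupport.1 fun h => hp h hx₁]
  · simp [notMem_mulSupport.1 fun h => hq h hx₂]

theorem exists_mem_mulSupport_eq_singleton [Finite X] (hG : IsSimpleGroup G)
    (hnc : ∃ u v : G, u * v ≠ v * u) (hconst : ∀ c : G, const X c ∈ S)
    (hsep : ∀ a b : X, a ≠ b → ∃ h ∈ S, a ∈ mulSupport h ∧ b ∉ mulSupport h) (a : X) :
    ∃ k ∈ S, mulSupport k = {a} := by
  classical
  have : Fintype X := Fintype.ofFinite X
  suffices ∀ T : Finset X, a ∉ T → ∃ k ∈ S, a ∈ mulSupport k ∧ Disjoint (mulSupport k) T by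
    obtain ⟨k, hkS, hak, hk⟩ := this (Finset.univ.erase a) (Finset.notMem_erase a _)
    refine ⟨k, hkS, Set.Subset.antisymm (fun x hx => ?_) (Set.singleton_subset_iff.2 hak)⟩
    by_contra hxa
    exact Set.disjoint_left.1 hk hx (by simpa using hxa)
  intro T
  induction T using Finset.induction_on with
  | empty =>
    obtain ⟨u, hu⟩ := exists_ne (1 : G)
    exact fun _ => ⟨const X u, hconst u, hu, by simp⟩
  | insert b T _ ih =>
    intro haT
    rw [Finset.mem_insert, not_or] at haT
    obtain ⟨k, hkS, hak, hk⟩ := ih haT.2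
    obtain ⟨h, hhS, hah, hbh⟩ := hsep a b haT.1
    obtain ⟨k', hk'S, hak', hk'⟩ :=
      exists_mem_mulSupport_subset_inter hG hnc hconst hkS hhS hak hah
    refine ⟨k', hk'S, hak', ?_⟩
    rw [Finset.coe_insert, Set.disjoint_insert_right]
    exact ⟨fun hb => hbh (hk' hb).2, hk.mono_left fun x hx => (hk' hx).1⟩

theorem mulSingle_mem_of_separates [Finite X] [DecidableEq X] (hG : IsSimpleGroup G)
    (hnc : ∃ u v : G, u * v ≠ v * u) (hconst : ∀ c : G, const X c ∈ S)
    (hsep : ∀ a b : X, a ≠ b → ∃ h ∈ S, a ∈ mulSupport h ∧ b ∉ mulSupport h) (a : X) (g : G) :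
    Pi.mulSingle a g ∈ S := by
  obtain ⟨h, hhS, hh⟩ := exists_mem_mulSupport_eq_singleton hG hnc hconst hsep a
  obtain ⟨k, hkS, hk, hka⟩ :=
    exists_mem_apply_eq_of_mem_mulSupport hG hconst hhS (hh ▸ Set.mem_singleton a) g
  convert hkS
  funext x
  rcases eq_or_ne x a with rfl | hxa
  · simp [hka]
  · rw [Pi.mulSingle_eq_of_ne hxa, eq_comm, ← notMem_mulSupport]
    exact fun hx => hxa (by simpa [hh] using hk hx)

theorem Subgroup.eq_top_of_const_mem_of_separates [Finite X] (hG : IsSimpleGroup G)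
    (hnc : ∃ u v : G, u * v ≠ v * u) (hconst : ∀ c : G, const X c ∈ S)
    (hsep : ∀ a b : X, a ≠ b → ∃ h ∈ S, a ∈ mulSupport h ∧ b ∉ mulSupport h) : S = ⊤ := by
  classical
  exact (eq_top_iff' S).2 fun f => Subgroup.pi_mem_of_mulSingle_mem f fun a =>
    mulSingle_mem_of_separates hG hnc hconst hsep a (f a)

end Separation

section CloneOnGroup

variable {G : Type u} [Group G]

def IsClone.subgroup {C : Set (Ops G)} (hC : IsClone C)
    (hmul : (⟨1, fun x => x 0 * x 1⟩ : Ops G) ∈ C) (hinv : (⟨0, fun x => (x 0)⁻¹⟩ : Ops G) ∈ C)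
    (n : ℕ) : Subgroup ((Fin (n + 1) → G) → G) where
  carrier := {f | (⟨n, f⟩ : Ops G) ∈ C}
  mul_mem' := hC.binary_comp_mem hmul
  inv_mem' := hC.unary_comp_mem hinv
  one_mem' := by
    have h := hC.binary_comp_mem hmul (hC.1 n 0) (hC.unary_comp_mem hinv (hC.1 n 0))
    simp only [mul_inv_cancel] at h
    exact h

theorem IsClone.eq_univ_of_isSimpleGroup [Finite G] (hG : IsSimpleGroup G)
    (hnc : ∃ u v : G, u * v ≠ v * u) {C : Set (Ops G)} (hC : IsClone C)
    (hmul : (⟨1, fun x => x 0 * x 1⟩ : Ops G) ∈ C) (hinv : (⟨0, fun x => (x 0)⁻¹⟩ : Ops G) ∈ C)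
    (hconst : ∀ c : G, (⟨0, fun _ => c⟩ : Ops G) ∈ C) : C = Set.univ := by
  refine Set.eq_univ_of_forall fun ⟨n, f⟩ => ?_
  have hsep (a b : Fin (n + 1) → G) (hab : a ≠ b) :
      ∃ h ∈ hC.subgroup hmul hinv n, a ∈ mulSupport h ∧ b ∉ mulSupport h := by
    obtain ⟨i, hi⟩ := Function.ne_iff.1 hab
    exact ⟨fun x => x i * (b i)⁻¹, Subgroup.mul_mem _ (hC.1 n i) (hC.const_mem (hconst _) n),
      by simpa [mul_inv_eq_one], by simp⟩
  have htop := (hC.subgroup hmul hinv n).eq_top_of_const_mem_of_separates hG hnc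
    (fun c => hC.const_mem (hconst c) n) hsep
  exact (htop ▸ Subgroup.mem_top f : f ∈ hC.subgroup hmul hinv n)

end CloneOnGroup

/-- **Maurer–Rhodes Theorem.**  Every finite simple group `G` is either abelian or
functionally complete: if `G` is not abelian, then the group multiplication and
inversion together with all constant unary operations generate the clone of all
finitary operations on `G`. -/
theorem maurer_rhodes (G : Type u) [Group G] [Fintype G] (hG : IsSimpleGroup G) :
    (∀ a b : G, a * b = b * a) ∨
      cloneGen (({⟨1, fun x : Fin 2 → G => x 0 * x 1⟩,
            ⟨0, fun x : Fin 1 → G => (x 0)⁻¹⟩} : Set (Ops G)) ∪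
          {f : Ops G | ∃ c : G, f = ⟨0, fun _ : Fin 1 → G => c⟩}) = Set.univ := by
  refine or_iff_not_imp_left.2 fun hcomm => ?_
  push Not at hcomm
  exact (isClone_cloneGen _).eq_univ_of_isSimpleGroup hG hcomm (subset_cloneGen _ (by simp))
    (subset_cloneGen _ (by simp)) fun c => subset_cloneGen _ (Or.inr ⟨c, rfl⟩)
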